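/- Let ρ be a bipartite distribution on U × V, let n ≥ 1, and let 0 < p < 1/2. Then col_ρ(n, p/2) ≤ 3n · agr_ρ(p) + 16. -/

import Mathlib

/-!
Fix an agreement protocol `(f, g)` of cost `c` and success probability at least `p`, and run it
on `n` independent blocks of samples. On block `k` each player tosses a private coin of bias
`⌈n f⌉₊ / n` (resp. `⌈n g⌉₊ / n`), which lies between `f` and `f + 1/n`, and puts `k` into its
set on heads; it outputs the set only if it has at most `K = ⌈3nc⌉₊ + 6` elements.
If `i` lies in both untruncated sets but is lost, one of them has at least `K` elements besides
`i`. By independence of the blocks, `i` is therefore kept with probability at least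
`γ (1 - (n - 1)(α + β) / K)`, where `γ ≥ p` is the probability that both coins of a block come up
heads and `α`, `β` are the probabilities of heads of each coin. Since `n (α + β) ≤ n c + 2 ≤ K/3`
this is at least `2γ/3 ≥ p/2`, and choosing `c < agr ρ p + 3/n` gives `K ≤ 3n · agr ρ p + 16`.
-/

open scoped BigOperators ENNReal

namespace SR

variable {U V X Y : Type*}

/-- `μ` is a probability distribution on a finite type. -/
def IsDist {α : Type*} [Fintype α] (μ : α → ℝ) : Prop :=
  (∀ a, 0 ≤ μ a) ∧ ∑ a, μ a = 1

/-- Expectation of `f` under `μ`. -/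
def expect {α : Type*} [Fintype α] (μ : α → ℝ) (f : α → ℝ) : ℝ :=
  ∑ a, μ a * f a

/-- First (`U`-)marginal of a bipartite distribution. -/
def margFst [Fintype V] (ρ : U × V → ℝ) : U → ℝ :=
  fun u => ∑ v, ρ (u, v)

/-- Second (`V`-)marginal of a bipartite distribution. -/
def margSnd [Fintype U] (ρ : U × V → ℝ) : V → ℝ :=
  fun v => ∑ u, ρ (u, v)

/-- Maximum correlation of a bipartite distribution (sSup of the empty set is 0). -/
noncomputable def cor [Fintype U] [Fintype V] (ρ : U × V → ℝ) : ℝ :=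
  sSup { t : ℝ | ∃ (f : U → ℝ) (g : V → ℝ),
      expect (margFst ρ) f = 0 ∧ expect (margSnd ρ) g = 0 ∧
      expect (margFst ρ) (fun u => f u ^ 2) = 1 ∧
      expect (margSnd ρ) (fun v => g v ^ 2) = 1 ∧
      t = ∑ x : U × V, ρ x * (f x.1 * g x.2) }

/-- Tensor product of two bipartite distributions. -/
def tensor (ρ : U × V → ℝ) (σ : X × Y → ℝ) : (U × X) × (V × Y) → ℝ :=
  fun p => ρ (p.1.1, p.2.1) * σ (p.1.2, p.2.2)

/-- Tensor product of a family of bipartite distributions. -/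
def tensorPi {n : ℕ} {U V : Fin n → Type*} (ρ : ∀ i, U i × V i → ℝ) :
    (∀ i, U i) × (∀ i, V i) → ℝ :=
  fun p => ∏ i, ρ i (p.1 i, p.2 i)

/-- The distribution of `ℓ` i.i.d. samples from a bipartite distribution `ρ`. -/
def iid (ρ : U × V → ℝ) (ℓ : ℕ) : (Fin ℓ → U) × (Fin ℓ → V) → ℝ :=
  fun p => ∏ i, ρ (p.1 i, p.2 i)

/-- Agreement complexity of `ρ` at success probability `p`. -/
noncomputable def agr [Fintype U] [Fintype V] (ρ : U × V → ℝ) (p : ℝ) : ℝ :=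
  sInf { c : ℝ | ∃ (ℓ : ℕ) (f : (Fin ℓ → U) → ℝ) (g : (Fin ℓ → V) → ℝ),
      (∀ x, f x ∈ Set.Icc (0:ℝ) 1) ∧ (∀ y, g y ∈ Set.Icc (0:ℝ) 1) ∧
      p ≤ (∑ x : (Fin ℓ → U) × (Fin ℓ → V), iid ρ ℓ x * (f x.1 * g x.2)) ∧
      c = (∑ x : (Fin ℓ → U) × (Fin ℓ → V), iid ρ ℓ x * f x.1)
        + (∑ x : (Fin ℓ → U) × (Fin ℓ → V), iid ρ ℓ x * g x.2) }

/-- There is a `p`-collision protocol for `ρ` with domain size `n` and output size at most `k`.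
    The players may use private randomness (uniform over `Fin sA`, `Fin sB` weighted by
    distributions `μA`, `μB`, independent of everything else). -/
def ColLE [Fintype U] [Fintype V] (ρ : U × V → ℝ) (n : ℕ) (p : ℝ) (k : ℕ) : Prop :=
  ∃ (ℓ sA sB : ℕ) (μA : Fin sA → ℝ) (μB : Fin sB → ℝ)
    (A : (Fin ℓ → U) → Fin sA → Finset (Fin n))
    (B : (Fin ℓ → V) → Fin sB → Finset (Fin n)),
    IsDist μA ∧ IsDist μB ∧
    (∀ i : Fin n, p ≤ ∑ x : (Fin ℓ → U) × (Fin ℓ → V), ∑ rA, ∑ rB,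
        iid ρ ℓ x * (μA rA * μB rB) *
          (if i ∈ A x.1 rA ∧ i ∈ B x.2 rB then (1:ℝ) else 0)) ∧
    (∀ (x : (Fin ℓ → U) × (Fin ℓ → V)) (rA : Fin sA),
        0 < iid ρ ℓ x → 0 < μA rA → (A x.1 rA).card ≤ k) ∧
    (∀ (x : (Fin ℓ → U) × (Fin ℓ → V)) (rB : Fin sB),
        0 < iid ρ ℓ x → 0 < μB rB → (B x.2 rB).card ≤ k)

/-- Collision complexity `col_ρ(n, p)`, valued in `ℕ∞` (`sInf ∅ = ⊤`). -/
noncomputable def col [Fintype U] [Fintype V] (ρ : U × V → ℝ) (n : ℕ) (p : ℝ) : ℕ∞ :=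
  sInf { k : ℕ∞ | ∃ m : ℕ, k = (m : ℕ∞) ∧ ColLE ρ n p m }

/-- Base-2 Shannon entropy of a finitely supported distribution. -/
noncomputable def ent2 {α : Type*} [Fintype α] (μ : α → ℝ) : ℝ :=
  ∑ a, -(μ a * Real.logb 2 (μ a))

open Classical in
/-- Probability of an event under `μ`. -/
noncomputable def prEvent {Ω : Type*} [Fintype Ω] (μ : Ω → ℝ) (P : Ω → Prop) : ℝ :=
  ∑ ω, if P ω then μ ω else 0

/-- The distribution of a random variable `Z` conditioned on an event `P`. -/
noncomputable def condDist {Ω α : Type*} [Fintype Ω] (μ : Ω → ℝ) (Z : Ω → α)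
    (P : Ω → Prop) : α → ℝ :=
  fun a => prEvent μ (fun ω => Z ω = a ∧ P ω) / prEvent μ P

/-- The `L^r(μ)`-norm of a complex-valued function on a finite probability space. -/
noncomputable def lnorm {α : Type*} [Fintype α] (μ : α → ℝ) (r : ℝ) (h : α → ℂ) : ℝ :=
  (∑ a, μ a * ‖h a‖ ^ r) ^ (1 / r)

/-- The conditional-expectation operator `T_ρ` of a bipartite distribution. -/
noncomputable def condOp [Fintype U] [Fintype V] (ρ : U × V → ℝ) (f : U → ℂ) : V → ℂ :=
  fun v => ∑ u, ((ρ (u, v) / margSnd ρ v : ℝ) : ℂ) * f u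

/-- `ρ` is `q`-to-`p` hypercontractive. -/
def Hyper [Fintype U] [Fintype V] (ρ : U × V → ℝ) (q p : ℝ) : Prop :=
  ∀ f : U → ℂ, lnorm (margSnd ρ) q (condOp ρ f) ≤ lnorm (margFst ρ) p f

/-- Inner product over 𝔽₂. -/
def ipF2 {m : ℕ} (u v : Fin m → ZMod 2) : ZMod 2 := ∑ i, u i * v i

/-- `σ_{m,b}`: uniform distribution on pairs `(u,v) ∈ 𝔽₂^m × 𝔽₂^m` with `u·v = b`. -/
noncomputable def sigmaIP (m : ℕ) (b : ZMod 2) :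
    ((Fin m → ZMod 2) × (Fin m → ZMod 2)) → ℝ :=
  fun p => if ipF2 p.1 p.2 = b then
      (((Finset.univ.filter
        (fun q : (Fin m → ZMod 2) × (Fin m → ZMod 2) => ipF2 q.1 q.2 = b)).card : ℝ))⁻¹
    else 0

/-- `ρ_disj`: uniform distribution on `{(0,0),(0,1),(1,0)} ⊆ {0,1} × {0,1}`
    (with `false = 0`, `true = 1`). -/
noncomputable def rhoDisj : Bool × Bool → ℝ :=
  fun x => if x = (true, true) then 0 else 1/3

open Finset

section Expect

variable {α β : Type*} [Fintype α] [Fintype β]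

lemma expect_add (μ f g : α → ℝ) :
    expect μ (fun a => f a + g a) = expect μ f + expect μ g := by
  simp only [expect, mul_add, sum_add_distrib]

lemma expect_sub (μ f g : α → ℝ) :
    expect μ (fun a => f a - g a) = expect μ f - expect μ g := by
  simp only [expect, mul_sub, sum_sub_distrib]

lemma expect_const_mul (μ f : α → ℝ) (c : ℝ) :
    expect μ (fun a => c * f a) = c * expect μ f := by
  simp only [expect, mul_sum, mul_left_comm]

lemma expect_finset_sum {J : Type*} (s : Finset J) (μ : α → ℝ) (F : J → α → ℝ) :
    expect μ (fun a => ∑ j ∈ s, F j a) = ∑ j ∈ s, expect μ (F j) := by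
  simp only [expect, mul_sum]
  exact sum_comm

lemma expect_mono {μ f g : α → ℝ} (hμ : ∀ a, 0 ≤ μ a) (h : ∀ a, f a ≤ g a) :
    expect μ f ≤ expect μ g :=
  sum_le_sum fun a _ => mul_le_mul_of_nonneg_left (h a) (hμ a)

lemma expect_nonneg {μ f : α → ℝ} (hμ : ∀ a, 0 ≤ μ a) (h : ∀ a, 0 ≤ f a) :
    0 ≤ expect μ f :=
  sum_nonneg fun a _ => mul_nonneg (hμ a) (h a)

lemma expect_const {μ : α → ℝ} (hμ : IsDist μ) (c : ℝ) : expect μ (fun _ => c) = c := by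
  simp only [expect, ← sum_mul, hμ.2, one_mul]

def prodWeight (μ : α → ℝ) (ν : β → ℝ) : α × β → ℝ := fun x => μ x.1 * ν x.2

lemma expect_prodWeight (μ : α → ℝ) (ν : β → ℝ) (F : α → β → ℝ) :
    expect (prodWeight μ ν) (fun x => F x.1 x.2) = expect μ (fun a => expect ν (F a)) := by
  simp only [expect, prodWeight, Fintype.sum_prod_type, mul_sum, mul_assoc]

lemma expect_prodWeight_mul (μ : α → ℝ) (ν : β → ℝ) (f : α → ℝ) (g : β → ℝ) :
    expect (prodWeight μ ν) (fun x => f x.1 * g x.2) = expect μ f * expect ν g := by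
  rw [expect_prodWeight (F := fun a b => f a * g b), expect, expect, sum_mul]
  simp only [expect_const_mul, mul_assoc]

lemma isDist_prodWeight {μ : α → ℝ} {ν : β → ℝ} (hμ : IsDist μ) (hν : IsDist ν) :
    IsDist (prodWeight μ ν) := by
  refine ⟨fun x => mul_nonneg (hμ.1 _) (hν.1 _), ?_⟩
  simpa [expect, hμ.2, hν.2] using expect_prodWeight_mul μ ν (fun _ => 1) (fun _ => 1)

end Expect

section PiWeight

variable {ι Z : Type*} [Fintype ι] [Fintype Z]

def piWeight (w : Z → ℝ) (z : ι → Z) : ℝ := ∏ k, w (z k)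

variable [DecidableEq ι] {w : Z → ℝ}

lemma expect_piWeight_prod (w : Z → ℝ) (F : ι → Z → ℝ) :
    expect (piWeight w) (fun z => ∏ k, F k (z k)) = ∏ k, expect w (F k) := by
  simp only [expect, piWeight, ← prod_mul_distrib]
  exact (Fintype.prod_sum fun k a => w a * F k a).symm

lemma isDist_piWeight (hw : IsDist w) : IsDist (piWeight (ι := ι) w) := by
  refine ⟨fun z => prod_nonneg fun k _ => hw.1 _, ?_⟩
  simpa [expect, hw.2] using expect_piWeight_prod (ι := ι) w (fun _ _ => 1)

lemma expect_piWeight_apply (hw : IsDist w) (F : Z → ℝ) (i : ι) :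
    expect (piWeight w) (fun z => F (z i)) = expect w F := by
  have key := expect_piWeight_prod w (fun k a => if k = i then F a else 1)
  rw [Fintype.prod_eq_single i (fun k hk => by simp [hk, expect_const hw])] at key
  simpa [Fintype.prod_eq_single i (fun k (hk : k ≠ i) => if_neg hk)] using key

lemma expect_piWeight_mul_apply (hw : IsDist w) (F G : Z → ℝ) {i j : ι} (hij : i ≠ j) :
    expect (piWeight w) (fun z => F (z i) * G (z j)) = expect w F * expect w G := by
  have key := expect_piWeight_prod w
    (fun k a => if k = i then F a else if k = j then G a else 1)
  have hrest : ∀ k, k ≠ i ∧ k ≠ j → ∀ a,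
      (if k = i then F a else if k = j then G a else 1) = 1 := fun k hk a => by
    simp [hk.1, hk.2]
  rw [Fintype.prod_eq_mul i j hij (fun k hk => by simp [hrest k hk, expect_const hw])] at key
  simpa [Fintype.prod_eq_mul i j hij (fun k hk => hrest k hk _), hij.symm] using key

end PiWeight

section Truncate

variable {ι : Type*}

def truncate (K : ℕ) (S : Finset ι) : Finset ι := if #S ≤ K then S else ∅

lemma card_truncate_le (K : ℕ) (S : Finset ι) : #(truncate K S) ≤ K := by
  unfold truncate
  split_ifs with h
  · exact h
  · simp

lemma mem_truncate {K : ℕ} {S : Finset ι} {i : ι} : i ∈ truncate K S ↔ i ∈ S ∧ #S ≤ K := by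
  unfold truncate
  split_ifs with h <;> simp [h]

variable [DecidableEq ι]

lemma one_sub_card_erase_add_div_nonpos {K : ℕ} (hK : 0 < K) {S : Finset ι} {i : ι} (hi : i ∈ S)
    (hS : K < #S) (t : ℝ) (ht : 0 ≤ t) : 1 - (#(S.erase i) + t) / K ≤ 0 := by
  have hcard : (K : ℝ) ≤ #(S.erase i) := by
    have := card_erase_add_one hi
    exact_mod_cast (by omega : K ≤ #(S.erase i))
  have hK' : (0 : ℝ) < K := by exact_mod_cast hK
  rw [sub_nonpos, one_le_div hK']
  linarith

/-- If truncation loses `i`, one of the sets has at least `K` elements besides `i`. -/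
lemma indicator_mul_le_indicator_mem_truncate {K : ℕ} (hK : 0 < K) (S T : Finset ι) (i : ι) :
    (if i ∈ S ∧ i ∈ T then (1 : ℝ) else 0) * (1 - (#(S.erase i) + #(T.erase i) : ℝ) / K)
      ≤ if i ∈ truncate K S ∧ i ∈ truncate K T then 1 else 0 := by
  by_cases hi : i ∈ S ∧ i ∈ T
  swap
  · rw [if_neg hi, zero_mul]
    split_ifs <;> norm_num
  rw [if_pos hi, one_mul]
  by_cases hST : #S ≤ K ∧ #T ≤ K
  · rw [if_pos ⟨mem_truncate.2 ⟨hi.1, hST.1⟩, mem_truncate.2 ⟨hi.2, hST.2⟩⟩]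
    have : (0 : ℝ) ≤ (#(S.erase i) + #(T.erase i) : ℝ) / K := by positivity
    linarith
  refine le_trans (b := 0) ?_ (by split_ifs <;> norm_num)
  rcases not_and_or.1 hST with hS | hT
  · exact one_sub_card_erase_add_div_nonpos hK hi.1 (not_le.1 hS) _ (Nat.cast_nonneg _)
  · rw [add_comm]
    exact one_sub_card_erase_add_div_nonpos hK hi.2 (not_le.1 hT) _ (Nat.cast_nonneg _)

end Truncate

section Collision

variable {ι Z : Type*} [Fintype ι] [DecidableEq ι] [Fintype Z] {w : Z → ℝ}

/-- The `z k` are independent blocks; Alice accepts block `k` if `PA (z k)`, Bob if `PB (z k)`. -/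
theorem le_expect_mem_truncate (hw : IsDist w) (PA PB : Z → Prop) [DecidablePred PA]
    [DecidablePred PB] {K : ℕ} (hK : 0 < K) (i : ι) :
    expect w (fun a => if PA a ∧ PB a then 1 else 0) *
        (1 - (Fintype.card ι - 1 : ℕ) * (expect w (fun a => if PA a then 1 else 0)
          + expect w (fun a => if PB a then 1 else 0)) / K)
      ≤ expect (piWeight w) (fun z =>
          if i ∈ truncate K {k | PA (z k)} ∧ i ∈ truncate K {k | PB (z k)} then 1 else 0) := by
  have hpair : ∀ (P : Z → Prop) [DecidablePred P],
      ∑ j ∈ univ.erase i, expect (piWeight w)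
          (fun z => (if PA (z i) ∧ PB (z i) then (1 : ℝ) else 0) * if P (z j) then 1 else 0)
        = (Fintype.card ι - 1 : ℕ) * (expect w (fun a => if PA a ∧ PB a then 1 else 0)
            * expect w (fun a => if P a then 1 else 0)) := by
    intro P _
    rw [sum_congr rfl fun j hj =>
        expect_piWeight_mul_apply hw (fun a => if PA a ∧ PB a then (1 : ℝ) else 0)
          (fun a => if P a then 1 else 0) (ne_of_mem_erase hj).symm,
      sum_const, card_erase_of_mem (mem_univ i), card_univ, nsmul_eq_mul]
  have hcard : ∀ (P : Z → Prop) [DecidablePred P] (z : ι → Z),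
      (#(({k | P (z k)} : Finset ι).erase i) : ℝ)
        = ∑ j ∈ univ.erase i, if P (z j) then 1 else 0 := by
    intro P _ z
    rw [← filter_erase, card_filter]
    push_cast
    rfl
  calc _ = expect (piWeight w) (fun z => (if PA (z i) ∧ PB (z i) then 1 else 0)
          - (K : ℝ)⁻¹ * ∑ j ∈ univ.erase i,
              (if PA (z i) ∧ PB (z i) then (1 : ℝ) else 0) * (if PA (z j) then 1 else 0)
          - (K : ℝ)⁻¹ * ∑ j ∈ univ.erase i,
              (if PA (z i) ∧ PB (z i) then (1 : ℝ) else 0) * (if PB (z j) then 1 else 0)) := by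
        rw [expect_sub, expect_sub, expect_const_mul, expect_const_mul, expect_finset_sum,
          expect_finset_sum, hpair, hpair,
          expect_piWeight_apply hw (fun a => if PA a ∧ PB a then (1 : ℝ) else 0)]
        ring
    _ ≤ _ := expect_mono (isDist_piWeight hw).1 fun z => by
        refine le_trans (le_of_eq ?_) (indicator_mul_le_indicator_mem_truncate hK _ _ i)
        simp only [mem_filter, mem_univ, true_and, hcard, ← mul_sum]
        ring

end Collision

section Blocks

variable {α : Type*} (n ℓ : ℕ)

def blocks : (Fin (n * ℓ) → α) ≃ (Fin n → Fin ℓ → α) :=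
  (finProdFinEquiv.arrowCongr (Equiv.refl α)).symm.trans (Equiv.curry _ _ _)

lemma iid_mul_eq_prod_blocks (ρ : U × V → ℝ) (x : (Fin (n * ℓ) → U) × (Fin (n * ℓ) → V)) :
    iid ρ (n * ℓ) x = ∏ k, iid ρ ℓ (blocks n ℓ x.1 k, blocks n ℓ x.2 k) := by
  rw [iid, ← Fintype.prod_equiv finProdFinEquiv _ _ fun _ => rfl, Fintype.prod_prod_type]
  rfl

variable {RA RB : Type*}

def blockSample :
    ((Fin (n * ℓ) → U) × (Fin (n * ℓ) → V)) × (Fin n → RA) × (Fin n → RB) ≃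
      (Fin n → ((Fin ℓ → U) × (Fin ℓ → V)) × RA × RB) :=
  ((((blocks n ℓ).prodCongr (blocks n ℓ)).trans
      (Equiv.arrowProdEquivProdArrow _ _ _).symm).prodCongr
    (Equiv.arrowProdEquivProdArrow _ _ _).symm).trans (Equiv.arrowProdEquivProdArrow _ _ _).symm

variable [Fintype U] [Fintype V] [Fintype RA] [Fintype RB]

lemma sum_iid_mul_eq_expect_piWeight (ρ : U × V → ℝ) (νA : RA → ℝ) (νB : RB → ℝ)
    (Φ : (Fin n → ((Fin ℓ → U) × (Fin ℓ → V)) × RA × RB) → ℝ) :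
    ∑ x : (Fin (n * ℓ) → U) × (Fin (n * ℓ) → V), ∑ rA, ∑ rB,
        iid ρ (n * ℓ) x * (piWeight νA rA * piWeight νB rB) * Φ (blockSample n ℓ (x, rA, rB))
      = expect (piWeight (prodWeight (iid ρ ℓ) (prodWeight νA νB))) Φ := by
  rw [expect, ← Equiv.sum_comp (blockSample n ℓ)]
  simp only [Fintype.sum_prod_type]
  refine sum_congr rfl fun x _ => sum_congr rfl fun rA _ => sum_congr rfl fun rB _ => ?_
  rw [iid_mul_eq_prod_blocks]
  simp only [piWeight, prodWeight, prod_mul_distrib]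
  rfl

end Blocks

lemma colLE_of_fintype {RA RB : Type*} [Fintype U] [Fintype V] [Fintype RA] [Fintype RB]
    (ρ : U × V → ℝ) {n ℓ k : ℕ} {p : ℝ} {νA : RA → ℝ} {νB : RB → ℝ}
    (A : (Fin ℓ → U) → RA → Finset (Fin n)) (B : (Fin ℓ → V) → RB → Finset (Fin n))
    (hνA : IsDist νA) (hνB : IsDist νB)
    (hcov : ∀ i : Fin n, p ≤ ∑ x : (Fin ℓ → U) × (Fin ℓ → V), ∑ rA, ∑ rB,
        iid ρ ℓ x * (νA rA * νB rB) * (if i ∈ A x.1 rA ∧ i ∈ B x.2 rB then (1 : ℝ) else 0))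
    (hA : ∀ x rA, 0 < iid ρ ℓ x → 0 < νA rA → #(A x.1 rA) ≤ k)
    (hB : ∀ x rB, 0 < iid ρ ℓ x → 0 < νB rB → #(B x.2 rB) ≤ k) :
    ColLE ρ n p k := by
  let eA := Fintype.equivFin RA
  let eB := Fintype.equivFin RB
  refine ⟨ℓ, _, _, νA ∘ eA.symm, νB ∘ eB.symm, fun u s => A u (eA.symm s),
    fun v s => B v (eB.symm s), ?_, ?_, fun i => ?_, fun x s => hA x _, fun x s => hB x _⟩
  · exact ⟨fun _ => hνA.1 _, (eA.symm.sum_comp νA).trans hνA.2⟩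
  · exact ⟨fun _ => hνB.1 _, (eB.symm.sum_comp νB).trans hνB.2⟩
  · refine (hcov i).trans_eq (sum_congr rfl fun x _ => ?_)
    rw [← eA.symm.sum_comp]
    exact sum_congr rfl fun rA _ => (eB.symm.sum_comp _).symm

lemma isDist_iid [Fintype U] [Fintype V] {ρ : U × V → ℝ} (hρ : IsDist ρ) (ℓ : ℕ) :
    IsDist (iid ρ ℓ) := by
  have h := isDist_piWeight (ι := Fin ℓ) hρ
  refine ⟨fun x => h.1 fun i => (x.1 i, x.2 i), ?_⟩
  rw [← h.2, ← (Equiv.arrowProdEquivProdArrow _ _ _).symm.sum_comp]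
  rfl

section Coins

variable {n : ℕ}

noncomputable def uniformWeight (n : ℕ) : Fin n → ℝ := fun _ => (n : ℝ)⁻¹

lemma isDist_uniformWeight (hn : 0 < n) : IsDist (uniformWeight n) :=
  ⟨fun _ => inv_nonneg.2 n.cast_nonneg, by simp [uniformWeight, (Nat.cast_pos.2 hn).ne']⟩

lemma expect_uniformWeight_lt {t : ℕ} (ht : t ≤ n) :
    expect (uniformWeight n) (fun a => if (a : ℕ) < t then 1 else 0) = t / n := by
  simp only [expect, uniformWeight, mul_ite, mul_one, mul_zero, sum_ite, sum_const_zero,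
    add_zero, sum_const, Fin.card_filter_val_lt, min_eq_right ht, nsmul_eq_mul, div_eq_mul_inv]

variable {x : ℝ}

lemma ceil_mul_le_of_le_one (hx : x ≤ 1) : ⌈n * x⌉₊ ≤ n :=
  Nat.ceil_le.2 (by nlinarith [(Nat.cast_nonneg n : (0 : ℝ) ≤ n)])

lemma le_ceil_mul_div (hn : 0 < n) : x ≤ ⌈n * x⌉₊ / n := by
  rw [le_div_iff₀ (Nat.cast_pos.2 hn), mul_comm]
  exact Nat.le_ceil _

lemma ceil_mul_div_le (hn : 0 < n) (hx : 0 ≤ x) : (⌈n * x⌉₊ : ℝ) / n ≤ x + 1 / n := by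
  have hn' : (0 : ℝ) < n := Nat.cast_pos.2 hn
  rw [div_le_iff₀ hn', add_mul, one_div_mul_cancel hn'.ne', mul_comm]
  exact (Nat.ceil_lt_add_one (by positivity)).le

lemma expect_ceil_mul_div_le {Y : Type*} [Fintype Y] {μ f : Y → ℝ} (hμ : IsDist μ) (hn : 0 < n)
    (hf : ∀ y, 0 ≤ f y) : expect μ (fun y => (⌈n * f y⌉₊ : ℝ) / n) ≤ expect μ f + 1 / n := by
  rw [← expect_const hμ (1 / n : ℝ), ← expect_add]
  exact expect_mono hμ.1 fun y => ceil_mul_div_le hn (hf y)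

lemma expect_threshold_coins {Y : Type*} [Fintype Y] (μ : Y → ℝ) {t s : Y → ℕ} (ht : ∀ y, t y ≤ n)
    (hs : ∀ y, s y ≤ n) :
    expect (prodWeight μ (prodWeight (uniformWeight n) (uniformWeight n)))
        (fun z => (if (z.2.1 : ℕ) < t z.1 then 1 else 0) * if (z.2.2 : ℕ) < s z.1 then 1 else 0)
      = expect μ (fun y => t y / n * (s y / n)) := by
  refine (expect_prodWeight μ _ fun y (r : Fin n × Fin n) =>
    (if (r.1 : ℕ) < t y then (1 : ℝ) else 0) * if (r.2 : ℕ) < s y then 1 else 0).trans ?_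
  congr 1
  funext y
  rw [expect_prodWeight_mul (f := fun a : Fin n => if (a : ℕ) < t y then (1 : ℝ) else 0)
    (g := fun b : Fin n => if (b : ℕ) < s y then (1 : ℝ) else 0), expect_uniformWeight_lt (ht y),
    expect_uniformWeight_lt (hs y)]

end Coins

noncomputable def acceptedBlocks {α : Type*} (n ℓ : ℕ) (f : (Fin ℓ → α) → ℝ) (x : Fin (n * ℓ) → α)
    (r : Fin n → Fin n) : Finset (Fin n) :=
  {k | (r k : ℕ) < ⌈n * f (blocks n ℓ x k)⌉₊}

lemma half_le_mul_one_sub_div_ceil {n : ℕ} (hn : 0 < n) {p γ α β c : ℝ} (hpγ : p ≤ γ)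
    (hγ : 0 ≤ γ) (hαβ₀ : 0 ≤ α + β) (hαβ : α + β ≤ c + 2 / n) :
    p / 2 ≤ γ * (1 - ((n - 1 : ℕ) : ℝ) * (α + β) / (⌈3 * n * c⌉₊ + 6 : ℕ)) := by
  have hn' : (0 : ℝ) < n := Nat.cast_pos.2 hn
  have hK : 3 * n * c + 6 ≤ (⌈3 * n * c⌉₊ + 6 : ℕ) := by
    push_cast
    linarith [Nat.le_ceil (3 * n * c)]
  have hcost : n * (α + β) ≤ n * c + 2 := by
    calc n * (α + β) ≤ n * (c + 2 / n) := mul_le_mul_of_nonneg_left hαβ hn'.le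
      _ = n * c + 2 := by field_simp
  have hsmall : ((n - 1 : ℕ) : ℝ) * (α + β) / (⌈3 * n * c⌉₊ + 6 : ℕ) ≤ 1 / 3 := by
    rw [div_le_iff₀ (by positivity)]
    nlinarith [mul_le_mul_of_nonneg_right (Nat.cast_le.2 (Nat.sub_le n 1) : _ ≤ (n : ℝ)) hαβ₀]
  nlinarith [mul_le_mul_of_nonneg_left hsmall hγ]

theorem colLE_of_agreement [Fintype U] [Fintype V] {ρ : U × V → ℝ} (hρ : IsDist ρ) {n : ℕ}
    (hn : 0 < n) {p : ℝ} {ℓ : ℕ} {f : (Fin ℓ → U) → ℝ} {g : (Fin ℓ → V) → ℝ}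
    (hf : ∀ x, f x ∈ Set.Icc (0 : ℝ) 1) (hg : ∀ y, g y ∈ Set.Icc (0 : ℝ) 1)
    (hs : p ≤ expect (iid ρ ℓ) (fun x => f x.1 * g x.2)) :
    ColLE ρ n (p / 2) (⌈3 * n * (expect (iid ρ ℓ) (fun x => f x.1)
      + expect (iid ρ ℓ) (fun x => g x.2))⌉₊ + 6) := by
  set tA : (Fin ℓ → U) × (Fin ℓ → V) → ℕ := fun y => ⌈n * f y.1⌉₊
  set tB : (Fin ℓ → U) × (Fin ℓ → V) → ℕ := fun y => ⌈n * g y.2⌉₊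
  have hiid := isDist_iid hρ ℓ
  have hunif := isDist_uniformWeight hn
  have hw := isDist_prodWeight hiid (isDist_prodWeight hunif hunif)
  refine colLE_of_fintype ρ (fun u r => truncate _ (acceptedBlocks n ℓ f u r))
    (fun v r => truncate _ (acceptedBlocks n ℓ g v r)) (isDist_piWeight hunif)
    (isDist_piWeight hunif) (fun i => ?_) (fun _ _ _ _ => card_truncate_le _ _)
    (fun _ _ _ _ => card_truncate_le _ _)
  refine le_trans ?_ ((le_expect_mem_truncate hw (fun z => (z.2.1 : ℕ) < tA z.1)
    (fun z => (z.2.2 : ℕ) < tB z.1) (by omega) i).trans_eq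
      (sum_iid_mul_eq_expect_piWeight n ℓ ρ _ _ _).symm)
  have htA : ∀ y, tA y ≤ n := fun y => ceil_mul_le_of_le_one (hf y.1).2
  have htB : ∀ y, tB y ≤ n := fun y => ceil_mul_le_of_le_one (hg y.2).2
  have hγ := expect_threshold_coins (iid ρ ℓ) htA htB
  have hα := expect_threshold_coins (iid ρ ℓ) htA (s := fun _ => n) fun _ => le_rfl
  have hβ := expect_threshold_coins (iid ρ ℓ) (t := fun _ => n) (fun _ => le_rfl) htB
  simp only [ite_zero_mul_ite_zero, mul_one, Fin.is_lt, if_true, one_mul,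
    div_self (Nat.cast_pos.2 hn : (0 : ℝ) < n).ne'] at hγ hα hβ
  rw [Fintype.card_fin, hγ, hα, hβ]
  refine half_le_mul_one_sub_div_ceil hn ?_ (expect_nonneg hiid.1 fun y => by positivity)
    (add_nonneg (expect_nonneg hiid.1 fun y => by positivity)
      (expect_nonneg hiid.1 fun y => by positivity)) ?_
  · exact hs.trans <| expect_mono hiid.1 fun y => mul_le_mul (le_ceil_mul_div hn)
      (le_ceil_mul_div hn) (hg _).1 ((hf _).1.trans (le_ceil_mul_div hn))
  · have := add_le_add (expect_ceil_mul_div_le hiid hn fun y : (Fin ℓ → U) × (Fin ℓ → V) =>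
      (hf y.1).1) (expect_ceil_mul_div_le hiid hn fun y : (Fin ℓ → U) × (Fin ℓ → V) => (hg y.2).1)
    linarith [show (2 : ℝ) / n = 1 / n + 1 / n by ring]

lemma exists_agreement_cost_lt_agr_add [Fintype U] [Fintype V] (ρ : U × V → ℝ) {p ε : ℝ}
    (hp : p ≤ 1) (hε : 0 < ε) :
    ∃ (ℓ : ℕ) (f : (Fin ℓ → U) → ℝ) (g : (Fin ℓ → V) → ℝ),
      (∀ x, f x ∈ Set.Icc (0 : ℝ) 1) ∧ (∀ y, g y ∈ Set.Icc (0 : ℝ) 1) ∧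
      p ≤ expect (iid ρ ℓ) (fun x => f x.1 * g x.2) ∧
      expect (iid ρ ℓ) (fun x => f x.1) + expect (iid ρ ℓ) (fun x => g x.2) < agr ρ p + ε := by
  obtain ⟨_, ⟨ℓ, f, g, hf, hg, hs, rfl⟩, hlt⟩ : ∃ c ∈ _, c < agr ρ p + ε :=
    Real.lt_sInf_add_pos (by exact ⟨_, 0, fun _ => 1, fun _ => 1, fun _ => by simp,
      fun _ => by simp, by simpa [iid], rfl⟩) hε
  exact ⟨ℓ, f, g, hf, hg, hs, hlt⟩

theorem stmt7_general {U V : Type} [Fintype U] [Fintype V]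
    (ρ : U × V → ℝ) (hρ : IsDist ρ) (n : ℕ) (hn : 1 ≤ n)
    (p : ℝ) (hp1 : p < 1/2) :
    ((col ρ n (p/2) : ℕ∞) : ℝ≥0∞) ≤ ENNReal.ofReal (3 * n * agr ρ p + 16) := by
  have hn' : (0 : ℝ) < n := by exact_mod_cast hn
  obtain ⟨ℓ, f, g, hf, hg, hs, hlt⟩ :=
    exists_agreement_cost_lt_agr_add ρ (by linarith) (div_pos three_pos hn')
  set c := expect (iid ρ ℓ) (fun x => f x.1) + expect (iid ρ ℓ) (fun x => g x.2)
  have hc : 0 ≤ c := add_nonneg (expect_nonneg (isDist_iid hρ ℓ).1 fun x => (hf x.1).1)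
    (expect_nonneg (isDist_iid hρ ℓ).1 fun x => (hg x.2).1)
  have hcol : col ρ n (p / 2) ≤ ((⌈3 * n * c⌉₊ + 6 : ℕ) : ℕ∞) :=
    sInf_le ⟨_, rfl, colLE_of_agreement hρ hn hf hg hs⟩
  have hK : ((⌈3 * n * c⌉₊ + 6 : ℕ) : ℝ) ≤ 3 * n * agr ρ p + 16 := by
    have h3 : 3 * n * c < 3 * n * agr ρ p + 9 := by
      calc 3 * n * c < 3 * n * (agr ρ p + 3 / n) := by gcongr
        _ = 3 * n * agr ρ p + 9 := by field_simp; ring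
    push_cast
    linarith [Nat.ceil_lt_add_one (by positivity : 0 ≤ 3 * n * c)]
  calc ((col ρ n (p / 2) : ℕ∞) : ℝ≥0∞) ≤ ((⌈3 * n * c⌉₊ + 6 : ℕ) : ℝ≥0∞) :=
        ENat.toENNReal_le.2 hcol
    _ ≤ ENNReal.ofReal (3 * n * agr ρ p + 16) := by
        rw [← ENNReal.ofReal_natCast]
        exact ENNReal.ofReal_le_ofReal hK

theorem stmt7 {U V : Type} [Fintype U] [Fintype V] [Nonempty U] [Nonempty V]
    (ρ : U × V → ℝ) (hρ : IsDist ρ) (n : ℕ) (hn : 1 ≤ n)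
    (p : ℝ) (hp0 : 0 < p) (hp1 : p < 1/2) :
    ((col ρ n (p/2) : ℕ∞) : ℝ≥0∞) ≤ ENNReal.ofReal (3 * n * agr ρ p + 16) :=
  stmt7_general ρ hρ n hn p hp1

end SR
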